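/- arXiv:1410.7583 — 4 statements merged into one kernel-verified Lean document; each statement's English description precedes it below -/
import Mathlib

section
/- For every fixed integer k ≥ 2 there exists a function g : ℕ → ℝ with g(n) = o(k^n/n) as n → ∞ (with respect to the atTop filter) such that for every n ≥ 1, every pseudo-PI-sequence with n states and k actions has size at most (k/(k−1))·(k^n/n) + g(n). -/
/-- A pseudo-PI-sequence of size `m` with `n` states and `k` actions:
a sequence of policies `σ 0, …, σ (L-1)` together with an improvement-set
assignment `T` satisfying the non-inclusion property, and a strictly
increasing choice of indices `idx 0 < … < idx (m-1)` satisfying the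
jumping property. -/
structure PseudoPISeq (n k m : ℕ) where
  /-- length of the underlying sequence of policies -/
  L : ℕ
  /-- the underlying sequence of policies -/
  σ : Fin L → Fin n → Fin k
  /-- the improvement-set assignment -/
  T : Fin L → Set (Fin n × Fin k)
  /-- improvement sets never contain the currently chosen action -/
  hT : ∀ t s, (s, σ t s) ∉ T t
  /-- the non-inclusion property: for `t < t'` there is an improvement state `s` of
  `σ t` with `σ t s ≠ σ t' s` and `(s, σ t s) ∉ T t'` -/
  nonincl : ∀ t t' : Fin L, t < t' →
    ∃ s, (∃ a, (s, a) ∈ T t) ∧ σ t s ≠ σ t' s ∧ (s, σ t s) ∉ T t'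
  /-- the selected indices `t_0 < t_1 < … < t_{m-1}` -/
  idx : Fin m → Fin L
  idx_mono : StrictMono idx
  /-- the jumping property: `t_{j+1} - t_j ≥ |S_{t_j}| + 1` -/
  jump : ∀ j : ℕ, ∀ hj : j + 1 < m,
    (idx ⟨j, Nat.lt_of_succ_lt hj⟩ : ℕ) +
      {s | ∃ a, (s, a) ∈ T (idx ⟨j, Nat.lt_of_succ_lt hj⟩)}.ncard + 1 ≤
      (idx ⟨j + 1, hj⟩ : ℕ)

/-!
Group the policies of the sequence by their improvement-state set `S`. Two policies `σ_t, σ_t'`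
with `t < t'` and the same `S` are separated by the non-inclusion property, so the functions
`x ↦ ∏_{s ∈ S} (𝟙[x s = σ_t s] - 𝟙[x s = b_t s])`, with `(s, b_t s) ∈ T_t`, form a triangular,
hence linearly independent, family; since each factor has zero sum they lie in a space of dimension
`(k-1)^|S|`, which bounds the number of such policies. Hence the indices `t_j` with `|S_{t_j}| < B`
number at most `∑_{i<B} C(n,i) (k-1)^i`, a binomial tail which a Chernoff bound makes `o(k^n/n)`
when `B ≤ (k-1)n/k - n^{3/4}`. The other indices are at least `B + 1` apart by the jumping
property, and all policies are distinct, so there are at most `k^n/(B+1) + 1` of them.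
-/

open Finset Filter Topology Real Asymptotics

section ProductSpan

variable {ι : Type*} [Fintype ι] {K : ℕ}

lemma eq_sum_castSucc_smul_of_sum_eq_zero {R : Type*} [CommRing R] {f : Fin (K + 1) → R}
    (hf : ∑ y, f y = 0) :
    f = ∑ c : Fin K, f c.castSucc •
      (Pi.single c.castSucc 1 - Pi.single (Fin.last K) 1 : Fin (K + 1) → R) := by
  rw [Fin.sum_univ_castSucc] at hf
  ext y
  induction y using Fin.lastCases with
  | last => simp [sum_neg_distrib, Fin.castSucc_ne_last]; linear_combination hf
  | cast y => simp [Pi.single_apply, Fin.castSucc_ne_last]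

lemma finrank_span_range_prod_le_of_sum_eq_zero {𝕜 J : Type*} [Field 𝕜]
    (χ : J → ι → Fin (K + 1) → 𝕜)
    (hχ : ∀ j s, ∑ y, χ j s y = 0) :
    (Set.range fun j (x : ι → Fin (K + 1)) ↦ ∏ s, χ j s (x s)).finrank 𝕜 ≤ K ^ Fintype.card ι := by
  classical
  set u : Fin K → Fin (K + 1) → 𝕜 := fun c ↦ Pi.single c.castSucc 1 - Pi.single (Fin.last K) 1
  set V := Submodule.span 𝕜 (Set.range fun (e : ι → Fin K) (x : ι → Fin (K + 1)) ↦
    ∏ s, u (e s) (x s))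
  have hmem : ∀ j, (fun x : ι → Fin (K + 1) ↦ ∏ s, χ j s (x s)) ∈ V := by
    intro j
    have hexp : (fun x : ι → Fin (K + 1) ↦ ∏ s, χ j s (x s)) =
        ∑ e : ι → Fin K, (∏ s, χ j s (e s).castSucc) • fun x ↦ ∏ s, u (e s) (x s) := by
      ext x
      conv_lhs => arg 2; ext s; rw [eq_sum_castSucc_smul_of_sum_eq_zero (hχ j s)]
      simp only [Finset.sum_apply, Pi.smul_apply, smul_eq_mul]
      rw [Fintype.prod_sum]
      simp only [prod_mul_distrib, u]
    rw [hexp]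
    exact Submodule.sum_mem _ fun e _ ↦ Submodule.smul_mem _ _ (Submodule.subset_span ⟨e, rfl⟩)
  calc _ ≤ Module.finrank 𝕜 V :=
        Submodule.finrank_mono (Submodule.span_le.2 (Set.range_subset_iff.2 hmem))
    _ ≤ Fintype.card (ι → Fin K) := finrank_range_le_card _
    _ = K ^ Fintype.card ι := by simp

lemma linearIndependent_of_apply_eq_zero_of_lt {R J X : Type*} [CommRing R] [NoZeroDivisors R]
    [LinearOrder J] [Finite J] {q : J → X → R} (x : J → X) (hdiag : ∀ j, q j (x j) ≠ 0)
    (hlt : ∀ j j', j < j' → q j' (x j) = 0) : LinearIndependent R q := by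
  rw [linearIndependent_iff']
  intro t c hc j hj
  induction j using WellFoundedLT.induction with
  | ind j ih =>
    have heval := congr_fun hc (x j)
    simp only [Finset.sum_apply, Pi.smul_apply, smul_eq_mul, Pi.zero_apply] at heval
    rw [sum_eq_single j] at heval
    · exact (mul_eq_zero.1 heval).resolve_right (hdiag j)
    · intro i hi hij
      rcases lt_or_gt_of_ne hij with h | h
      · rw [ih i h hi, zero_mul]
      · rw [hlt j i h, mul_zero]
    · exact fun h ↦ absurd hj h

theorem card_le_pow_of_forall_lt_exists_ne {J : Type*} [LinearOrder J] [Fintype J]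
    (g b : J → ι → Fin (K + 1)) (hgb : ∀ j s, g j s ≠ b j s)
    (hsep : ∀ j j', j < j' → ∃ s, g j s ≠ g j' s ∧ g j s ≠ b j' s) :
    Fintype.card J ≤ K ^ Fintype.card ι := by
  set χ : J → ι → Fin (K + 1) → ℚ := fun j s ↦ Pi.single (g j s) 1 - Pi.single (b j s) 1
  have hχ : ∀ j s, ∑ y, χ j s y = 0 := fun j s ↦ by simp [χ, sum_sub_distrib]
  have hind : LinearIndependent ℚ fun j (x : ι → Fin (K + 1)) ↦ ∏ s, χ j s (x s) := by
    refine linearIndependent_of_apply_eq_zero_of_lt g (fun j ↦ ?_) fun j j' hjj' ↦ ?_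
    · simp [χ, hgb]
    · obtain ⟨s, hg, hb⟩ := hsep j j' hjj'
      exact prod_eq_zero (mem_univ s) (by simp [χ, hg, hb])
  rw [← finrank_span_eq_card hind]
  exact finrank_span_range_prod_le_of_sum_eq_zero χ hχ

end ProductSpan

lemma card_le_div_add_one_of_add_le {α : Type*} [LinearOrder α] {s : Finset α} {f : α → ℕ}
    {d L : ℕ} (hd : 0 < d) (hlt : ∀ x ∈ s, f x < L)
    (hgap : ∀ x ∈ s, ∀ y ∈ s, x < y → f x + d ≤ f y) : #s ≤ L / d + 1 := by
  have hdiv : ∀ x ∈ s, ∀ y ∈ s, x < y → f x / d < f y / d := fun x hx y hy hxy ↦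
    calc f x / d < f x / d + 1 := Nat.lt_succ_self _
      _ = (f x + d) / d := (Nat.add_div_right _ hd).symm
      _ ≤ f y / d := Nat.div_le_div_right (hgap x hx y hy hxy)
  calc #s ≤ #(range (L / d + 1)) := by
        refine card_le_card_of_injOn (fun x ↦ f x / d) (fun x hx ↦ ?_) fun x hx y hy hxy ↦ ?_
        · exact mem_range.2 (Nat.lt_succ_of_le (Nat.div_le_div_right (hlt x hx).le))
        · by_contra hne
          rcases lt_or_gt_of_ne hne with h | h
          · exact (hdiv x hx y hy h).ne hxy
          · exact (hdiv y hy x hx h).ne hxy.symm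
    _ = L / d + 1 := card_range _

namespace PseudoPISeq

variable {n k m : ℕ} (P : PseudoPISeq n k m)

noncomputable def improvementStates (t : Fin P.L) : Finset (Fin n) :=
  (Set.toFinite {s | ∃ a, (s, a) ∈ P.T t}).toFinset

lemma mem_improvementStates {P : PseudoPISeq n k m} {t : Fin P.L} {s : Fin n} :
    s ∈ P.improvementStates t ↔ ∃ a, (s, a) ∈ P.T t :=
  Set.Finite.mem_toFinset _

lemma card_improvementStates (t : Fin P.L) :
    #(P.improvementStates t) = {s | ∃ a, (s, a) ∈ P.T t}.ncard :=
  (Set.ncard_eq_toFinset_card _ _).symm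

lemma σ_injective : Function.Injective P.σ := by
  intro t t' h
  by_contra hne
  rcases lt_or_gt_of_ne hne with hlt | hlt
  · obtain ⟨s, -, hs, -⟩ := P.nonincl t t' hlt
    exact hs (congr_fun h s)
  · obtain ⟨s, -, hs, -⟩ := P.nonincl t' t hlt
    exact hs (congr_fun h s).symm

lemma L_le_pow : P.L ≤ k ^ n := by
  simpa using Fintype.card_le_of_injective _ P.σ_injective

lemma idx_add_card_improvementStates_lt {j j' : Fin m} (h : j < j') :
    (P.idx j : ℕ) + #(P.improvementStates (P.idx j)) < P.idx j' := by
  have hj : (j : ℕ) + 1 < m := by omega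
  have hjump := P.jump j hj
  have hmono : P.idx ⟨j + 1, hj⟩ ≤ P.idx j' := P.idx_mono.monotone (Fin.mk_le_of_le_val h)
  rw [card_improvementStates]
  exact lt_of_lt_of_le (by simpa using hjump) hmono

lemma card_filter_improvementStates_eq_le {K : ℕ} (P : PseudoPISeq n (K + 1) m)
    (S : Finset (Fin n)) : #{t | P.improvementStates t = S} ≤ K ^ #S := by
  have hact : ∀ (t : {t // P.improvementStates t = S}) (s : S), ∃ a, (s.1, a) ∈ P.T t :=
    fun t s ↦ mem_improvementStates.1 (t.2.symm ▸ s.2)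
  choose b hb using hact
  have hsep : ∀ t t' : {t // P.improvementStates t = S}, t < t' →
      ∃ s : S, P.σ t s ≠ P.σ t' s ∧ P.σ t s ≠ b t' s := by
    intro t t' htt'
    obtain ⟨s, hs, hne, hnot⟩ := P.nonincl t t' htt'
    refine ⟨⟨s, t.2 ▸ mem_improvementStates.2 hs⟩, hne, fun h ↦ hnot ?_⟩
    simpa [h] using hb t' ⟨s, _⟩
  have := card_le_pow_of_forall_lt_exists_ne
    (fun (t : {t // P.improvementStates t = S}) (s : S) ↦ P.σ t s) b
    (fun t s h ↦ P.hT t s (h ▸ hb t s)) hsep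
  rwa [Fintype.card_subtype, Fintype.card_coe] at this

lemma card_filter_card_improvementStates_eq_le {K : ℕ} (P : PseudoPISeq n (K + 1) m) (i : ℕ) :
    #{t | #(P.improvementStates t) = i} ≤ n.choose i * K ^ i := by
  have hmaps : ∀ t ∈ ({t | #(P.improvementStates t) = i} : Finset _),
      P.improvementStates t ∈ powersetCard i (univ : Finset (Fin n)) := by
    simp
  have hfiber : ∀ S ∈ powersetCard i (univ : Finset (Fin n)),
      #{t ∈ {t | #(P.improvementStates t) = i} | P.improvementStates t = S} ≤ K ^ i := by
    intro S hS
    rw [← (mem_powersetCard.1 hS).2]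
    exact (card_le_card (filter_subset_filter _ (subset_univ _))).trans
      (P.card_filter_improvementStates_eq_le S)
  have := card_le_mul_card_image_of_maps_to hmaps _ hfiber
  rwa [card_powersetCard, card_univ, Fintype.card_fin, mul_comm] at this

lemma card_filter_card_improvementStates_lt_le {K : ℕ} (P : PseudoPISeq n (K + 1) m) (B : ℕ) :
    #{t | #(P.improvementStates t) < B} ≤ ∑ i ∈ range B, n.choose i * K ^ i := by
  rw [card_eq_sum_card_fiberwise (f := fun t ↦ #(P.improvementStates t)) (t := range B)
    fun t ht ↦ by simpa using ht]
  exact sum_le_sum fun i _ ↦ (card_le_card (filter_subset_filter _ (subset_univ _))).trans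
    (P.card_filter_card_improvementStates_eq_le i)

lemma card_filter_le_card_improvementStates_idx_le (B : ℕ) :
    #{j | B ≤ #(P.improvementStates (P.idx j))} ≤ P.L / (B + 1) + 1 := by
  refine card_le_div_add_one_of_add_le (f := fun j ↦ (P.idx j : ℕ)) B.succ_pos
    (fun j _ ↦ (P.idx j).2) fun j hj j' _ hjj' ↦ ?_
  have := P.idx_add_card_improvementStates_lt hjj'
  simp only [mem_filter, mem_univ, true_and] at hj
  omega

theorem size_le {K : ℕ} (P : PseudoPISeq n (K + 1) m) (B : ℕ) :
    m ≤ ∑ i ∈ range B, n.choose i * K ^ i + (K + 1) ^ n / (B + 1) + 1 := by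
  have hsmall : #{j | ¬B ≤ #(P.improvementStates (P.idx j))} ≤
      ∑ i ∈ range B, n.choose i * K ^ i := by
    refine le_trans (card_le_card_of_injOn P.idx (fun j hj ↦ ?_) P.idx_mono.injective.injOn)
      (P.card_filter_card_improvementStates_lt_le B)
    simpa using hj
  have hlarge := P.card_filter_le_card_improvementStates_idx_le B
  have hL := Nat.div_le_div_right (c := B + 1) P.L_le_pow
  have := card_filter_add_card_filter_not (s := (univ : Finset (Fin m)))
    fun j ↦ B ≤ #(P.improvementStates (P.idx j))
  rw [card_univ, Fintype.card_fin] at this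
  omega

end PseudoPISeq

lemma sum_range_choose_mul_pow_le (n B : ℕ) {y : ℝ} (hy : 0 ≤ y) :
    ∑ i ∈ range B, (n.choose i : ℝ) * y ^ i ≤ (y + 1) ^ n :=
  calc ∑ i ∈ range B, (n.choose i : ℝ) * y ^ i
      ≤ ∑ i ∈ range (B + (n + 1)), (n.choose i : ℝ) * y ^ i :=
        sum_le_sum_of_subset_of_nonneg (range_subset_range.2 le_self_add)
          fun _ _ _ ↦ by positivity
    _ = ∑ i ∈ range (n + 1), (n.choose i : ℝ) * y ^ i := by
        refine (sum_subset (range_subset_range.2 le_add_self) fun i _ hi ↦ ?_).symm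
        rw [Nat.choose_eq_zero_of_lt (by simpa using hi), Nat.cast_zero, zero_mul]
    _ = (y + 1) ^ n := by
        rw [add_pow]
        exact sum_congr rfl fun i _ ↦ by ring

lemma pow_mul_sum_range_choose_mul_pow_le (n B : ℕ) {x θ : ℝ} (hx : 0 ≤ x) (hθ0 : 0 ≤ θ)
    (hθ1 : θ ≤ 1) : θ ^ B * ∑ i ∈ range B, (n.choose i : ℝ) * x ^ i ≤ (x * θ + 1) ^ n := by
  refine le_trans ?_ (sum_range_choose_mul_pow_le n B (mul_nonneg hx hθ0))
  rw [mul_sum]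
  refine sum_le_sum fun i hi ↦ ?_
  have hθi : θ ^ B ≤ θ ^ i := pow_le_pow_of_le_one hθ0 hθ1 (mem_range.1 hi).le
  calc θ ^ B * ((n.choose i : ℝ) * x ^ i) ≤ θ ^ i * ((n.choose i : ℝ) * x ^ i) :=
        mul_le_mul_of_nonneg_right hθi (by positivity)
    _ = (n.choose i : ℝ) * (x * θ) ^ i := by ring

theorem sum_range_choose_mul_pow_le_exp {n B : ℕ} {x D : ℝ} (hn : 0 < n) (hx : 0 ≤ x)
    (hD : 0 ≤ D) (hBD : B + D ≤ x / (x + 1) * n) :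
    ∑ i ∈ range B, (n.choose i : ℝ) * x ^ i ≤ (x + 1) ^ n * exp (-D ^ 2 / (8 * n)) := by
  have hn' : (0 : ℝ) < n := Nat.cast_pos.2 hn
  set p := x / (x + 1)
  have hp : p ≤ 1 := div_le_one_of_le₀ (by linarith) (by linarith)
  -- `ε = D / (4n)` minimizes `-ε D + 2 ε² n`, the exponent reached below.
  set ε := D / (4 * n)
  have hε0 : 0 ≤ ε := by positivity
  have hε : ε ≤ 1 / 4 := by
    rw [div_le_iff₀ (by positivity)]
    nlinarith [(Nat.cast_nonneg B : (0 : ℝ) ≤ B)]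
  set θ := 1 - ε
  have hθ : 1 ≤ θ * exp (ε + 2 * ε ^ 2) := by
    nlinarith [add_one_le_exp (ε + 2 * ε ^ 2)]
  have hbase : x * θ + 1 ≤ (x + 1) * exp (-(p * ε)) := by
    have : x * θ + 1 = (x + 1) * (-(p * ε) + 1) := by
      simp only [θ, p]
      field_simp
      ring
    rw [this]
    exact mul_le_mul_of_nonneg_left (add_one_le_exp _) (by linarith)
  have hexp : (ε + 2 * ε ^ 2) * B - p * ε * n ≤ -D ^ 2 / (8 * n) := by
    have hBn : (B : ℝ) ≤ n := by nlinarith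
    have : -D ^ 2 / (8 * n) = -(ε * D) + 2 * ε ^ 2 * n := by
      simp only [ε]
      field_simp
      ring
    rw [this]
    nlinarith
  set S := ∑ i ∈ range B, (n.choose i : ℝ) * x ^ i
  calc S ≤ (θ * exp (ε + 2 * ε ^ 2)) ^ B * S :=
        le_mul_of_one_le_left (by positivity) (one_le_pow₀ hθ)
    _ = exp ((ε + 2 * ε ^ 2) * B) * (θ ^ B * S) := by
        rw [mul_pow, ← exp_nat_mul]
        ring_nf
    _ ≤ exp ((ε + 2 * ε ^ 2) * B) * (x * θ + 1) ^ n :=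
        mul_le_mul_of_nonneg_left
          (pow_mul_sum_range_choose_mul_pow_le n B hx (by linarith) (by linarith)) (exp_pos _).le
    _ ≤ exp ((ε + 2 * ε ^ 2) * B) * ((x + 1) * exp (-(p * ε))) ^ n :=
        mul_le_mul_of_nonneg_left (pow_le_pow_left₀ (by nlinarith) hbase n) (exp_pos _).le
    _ = (x + 1) ^ n * exp ((ε + 2 * ε ^ 2) * B - p * ε * n) := by
        rw [mul_pow, ← exp_nat_mul, sub_eq_add_neg, exp_add]
        ring_nf
    _ ≤ (x + 1) ^ n * exp (-D ^ 2 / (8 * n)) :=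
        mul_le_mul_of_nonneg_left (exp_le_exp.2 hexp) (pow_nonneg (by linarith) n)

lemma tendsto_rpow_three_quarters_div_atTop :
    Tendsto (fun n : ℕ ↦ (n : ℝ) ^ (3 / 4 : ℝ) / n) atTop (𝓝 0) := by
  refine ((tendsto_rpow_neg_atTop (y := 1 / 4) (by norm_num)).comp
    tendsto_natCast_atTop_atTop).congr' ?_
  filter_upwards [eventually_ne_atTop 0] with n hn
  rw [Function.comp_apply, ← rpow_sub_one (Nat.cast_ne_zero.2 hn)]
  norm_num

lemma tendsto_mul_exp_neg_rpow_three_quarters_sq_atTop :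
    Tendsto (fun n : ℕ ↦ (n : ℝ) * exp (-((n : ℝ) ^ (3 / 4 : ℝ)) ^ 2 / (8 * n))) atTop (𝓝 0) := by
  refine ((tendsto_rpow_mul_exp_neg_mul_atTop_nhds_zero 2 (1 / 8) (by norm_num)).comp
    ((tendsto_rpow_atTop (y := 1 / 2) (by norm_num)).comp tendsto_natCast_atTop_atTop)).congr' ?_
  filter_upwards [eventually_ne_atTop 0] with n hn
  have hsq : ((n : ℝ) ^ (3 / 4 : ℝ)) ^ 2 = n * (n : ℝ) ^ (1 / 2 : ℝ) := by
    rw [← rpow_natCast, ← rpow_mul (Nat.cast_nonneg n), ← rpow_one_add' (Nat.cast_nonneg n)]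
    all_goals norm_num
  have hexp : -(n * (n : ℝ) ^ (1 / 2 : ℝ)) / (8 * n) = -(1 / 8) * (n : ℝ) ^ (1 / 2 : ℝ) := by
    field_simp
  simp only [Function.comp_apply]
  rw [← rpow_mul (Nat.cast_nonneg n), hsq, hexp]
  norm_num

noncomputable def threshold (K n : ℕ) : ℕ := ⌊(K / (K + 1) : ℝ) * n - (n : ℝ) ^ (3 / 4 : ℝ)⌋₊

lemma threshold_le (K n : ℕ) : (threshold K n : ℝ) ≤ K / (K + 1) * n :=
  (Nat.cast_le.2 (Nat.floor_le_floor (sub_le_self _ (by positivity)))).trans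
    (Nat.floor_le (by positivity))

lemma sum_range_threshold_le {n : ℕ} (hn : 0 < n) (K : ℕ) :
    ∑ i ∈ range (threshold K n), (n.choose i : ℝ) * K ^ i ≤
      (K + 1) ^ n * exp (-((n : ℝ) ^ (3 / 4 : ℝ)) ^ 2 / (8 * n)) := by
  by_cases h : threshold K n = 0
  · rw [h, sum_range_zero]
    positivity
  · refine sum_range_choose_mul_pow_le_exp hn K.cast_nonneg (by positivity) ?_
    have hpos := Nat.floor_pos.1 (Nat.pos_of_ne_zero h)
    have := Nat.floor_le (zero_le_one.trans hpos)
    unfold threshold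
    linarith

lemma tendsto_threshold_add_one_div (K : ℕ) :
    Tendsto (fun n ↦ ((threshold K n : ℝ) + 1) / n) atTop (𝓝 (K / (K + 1))) := by
  have hlow : Tendsto (fun n : ℕ ↦ K / (K + 1) - (n : ℝ) ^ (3 / 4 : ℝ) / n) atTop
      (𝓝 (K / (K + 1))) := by
    simpa using tendsto_rpow_three_quarters_div_atTop.const_sub ((K : ℝ) / (K + 1))
  have hhigh : Tendsto (fun n : ℕ ↦ K / (K + 1) + 1 / (n : ℝ)) atTop (𝓝 (K / (K + 1))) := by
    simpa using tendsto_one_div_atTop_nhds_zero_nat.const_add ((K : ℝ) / (K + 1))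
  refine tendsto_of_tendsto_of_tendsto_of_le_of_le' hlow hhigh ?_ ?_ <;>
    filter_upwards [eventually_ne_atTop 0] with n hn
  · calc (K / (K + 1) : ℝ) - (n : ℝ) ^ (3 / 4 : ℝ) / n
        = ((K / (K + 1) : ℝ) * n - (n : ℝ) ^ (3 / 4 : ℝ)) / n := by field_simp
      _ ≤ ((threshold K n : ℝ) + 1) / n := by
        gcongr
        exact (Nat.lt_floor_add_one _).le
  · calc ((threshold K n : ℝ) + 1) / n ≤ ((K / (K + 1) : ℝ) * n + 1) / n := by
          gcongr
          exact threshold_le K n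
      _ = K / (K + 1) + 1 / (n : ℝ) := by field_simp

noncomputable def sizeBound (K n : ℕ) : ℝ :=
  ∑ i ∈ range (threshold K n), (n.choose i : ℝ) * K ^ i + (K + 1) ^ n / (threshold K n + 1) + 1

theorem isLittleO_sizeBound_sub {K : ℕ} (hK : 0 < K) :
    (fun n ↦ sizeBound K n - (K + 1) / K * ((K + 1) ^ n / n)) =o[atTop]
      fun n ↦ ((K : ℝ) + 1) ^ n / n := by
  have hK' : (0 : ℝ) < K := Nat.cast_pos.2 hK
  have hne : ∀ᶠ n : ℕ in atTop, ((K : ℝ) + 1) ^ n / n ≠ 0 := by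
    filter_upwards [eventually_ne_atTop 0] with n hn
    positivity
  rw [isLittleO_iff_tendsto' (hne.mono fun n hn h ↦ absurd h hn)]
  have htail : Tendsto (fun n : ℕ ↦ (∑ i ∈ range (threshold K n), (n.choose i : ℝ) * K ^ i) * n /
      (K + 1) ^ n) atTop (𝓝 0) := by
    refine squeeze_zero' (Eventually.of_forall fun n ↦ by positivity) ?_
      tendsto_mul_exp_neg_rpow_three_quarters_sq_atTop
    filter_upwards [eventually_gt_atTop 0] with n hn
    rw [div_le_iff₀ (by positivity)]
    calc (∑ i ∈ range (threshold K n), (n.choose i : ℝ) * K ^ i) * n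
        ≤ (K + 1) ^ n * exp (-((n : ℝ) ^ (3 / 4 : ℝ)) ^ 2 / (8 * n)) * n :=
          mul_le_mul_of_nonneg_right (sum_range_threshold_le hn K) n.cast_nonneg
      _ = _ := by ring
  have hmain : Tendsto (fun n : ℕ ↦ (n : ℝ) / (threshold K n + 1)) atTop (𝓝 ((K + 1) / K)) := by
    simpa using (tendsto_threshold_add_one_div K).inv₀ (by positivity)
  have hone : Tendsto (fun n : ℕ ↦ (n : ℝ) / (K + 1) ^ n) atTop (𝓝 0) := by
    simpa using tendsto_pow_const_div_const_pow_of_one_lt 1 (r := K + 1) (by linarith)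
  have hsum := (htail.add (hmain.sub_const ((K + 1) / K))).add hone
  rw [sub_self, add_zero, add_zero] at hsum
  refine hsum.congr' ?_
  filter_upwards [eventually_ne_atTop 0] with n hn
  simp only [sizeBound]
  field_simp
  ring

namespace PseudoPISeq

theorem size_le_sizeBound {n m K : ℕ} (P : PseudoPISeq n (K + 1) m) :
    (m : ℝ) ≤ sizeBound K n := by
  have hsize := Nat.cast_le (α := ℝ).2 (P.size_le (threshold K n))
  have hdiv := Nat.cast_div_le (α := ℝ) (m := (K + 1) ^ n) (n := threshold K n + 1)
  push_cast at hsize hdiv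
  rw [sizeBound]
  linarith

end PseudoPISeq

open Asymptotics Filter in
theorem pseudoPI_asymptotic_upper_bound (k : ℕ) (hk : 2 ≤ k) :
    ∃ g : ℕ → ℝ,
      g =o[atTop] (fun n : ℕ => (k : ℝ) ^ n / n) ∧
      ∀ n : ℕ, 1 ≤ n → ∀ m : ℕ, PseudoPISeq n k m →
        (m : ℝ) ≤ (k : ℝ) / ((k : ℝ) - 1) * ((k : ℝ) ^ n / n) + g n := by
  obtain ⟨K, rfl⟩ : ∃ K, k = K + 1 := ⟨k - 1, by omega⟩
  refine ⟨fun n ↦ sizeBound K n - (K + 1) / K * ((K + 1) ^ n / n), ?_, fun n _ m P ↦ ?_⟩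
  · push_cast
    exact isLittleO_sizeBound_sub (by omega)
  · push_cast
    rw [add_sub_cancel_right]
    linarith [P.size_le_sizeBound]
end

section
/- For all integers n ≥ 1 and k ≥ 2, the sum over all d ∈ {0, 1, …, n} satisfying (d : ℝ) ≤ ((k−1)/k)·n − √(n·log n) of C(n, d)·(k−1)^d is at most k^n/n², where log denotes the real natural logarithm and C(n, d) is the binomial coefficient. -/
/-!
Chernoff's method: every `d ≤ M` satisfies `1 ≤ exp (s * (M - d))` for `s ≥ 0`, so the
truncated sum is at most the full binomial sum `exp (s * M) * ((k - 1) * exp (-s) + 1) ^ n`,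
which equals `exp (s * M) * k ^ n * (1 - p + p * exp (-s)) ^ n` with `p = (k - 1) / k`.
Hoeffding's lemma for a Bernoulli(`p`) variable bounds the last factor by
`exp (n * (-p * s + s ^ 2 / 8))`, and the choice `s = 4 √(n log n) / n` makes the total
exponent `-2 log n`.
-/

open Real MeasureTheory ProbabilityTheory Finset

theorem one_sub_add_mul_exp_le {p : ℝ} (hp0 : 0 ≤ p) (hp1 : p ≤ 1) (s : ℝ) :
    1 - p + p * exp s ≤ exp (p * s + s ^ 2 / 8) := by
  have hoeffding := (hasSubgaussianMGF_of_mem_Icc (X := fun b : Bool => if b then (1 : ℝ) else 0)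
    (μ := bernoulliMeasure true false ⟨p, hp0, hp1⟩) (a := 0) (b := 1)
    (measurable_of_finite _).aemeasurable (ae_of_all _ fun b => by cases b <;> simp)).mgf_le s
  simp only [mgf, integral_bernoulliMeasure, ↓reduceIte, smul_eq_mul, mul_one, Bool.false_eq_true,
    mul_zero, add_zero, zero_sub, mul_neg, sub_zero, nnnorm_one, one_div, inv_pow, NNReal.coe_inv,
    NNReal.coe_pow, NNReal.coe_ofNat] at hoeffding
  calc 1 - p + p * exp s
      = (p * exp (s * (1 - p)) + (1 - p) * exp (-(s * p))) * exp (p * s) := by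
        rw [add_mul, mul_assoc, mul_assoc, ← exp_add, ← exp_add,
          show s * (1 - p) + p * s = s by ring, show -(s * p) + p * s = 0 by ring, exp_zero]
        ring
    _ ≤ exp ((2 ^ 2)⁻¹ * s ^ 2 / 2) * exp (p * s) := by gcongr
    _ = exp (p * s + s ^ 2 / 8) := by rw [← exp_add]; ring_nf

theorem chernoff_sum_choose_mul_pow_le (n : ℕ) {a s : ℝ} (M : ℝ) (ha : 0 ≤ a)
    (hs : 0 ≤ s) :
    ∑ d ∈ (range (n + 1)).filter (fun d : ℕ => (d : ℝ) ≤ M), (n.choose d : ℝ) * a ^ d ≤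
      exp (s * M) * (a * exp (-s) + 1) ^ n := by
  have hterm (d : ℕ) (hd : (d : ℝ) ≤ M) :
      (n.choose d : ℝ) * a ^ d ≤ exp (s * M) * ((n.choose d : ℝ) * (a * exp (-s)) ^ d) := by
    have hone : 1 ≤ exp (s * M) * exp (-s) ^ d := by
      rw [← exp_nat_mul, ← exp_add, one_le_exp_iff]
      nlinarith
    calc (n.choose d : ℝ) * a ^ d ≤ (n.choose d : ℝ) * a ^ d * (exp (s * M) * exp (-s) ^ d) :=
          le_mul_of_one_le_right (by positivity) hone
      _ = exp (s * M) * ((n.choose d : ℝ) * (a * exp (-s)) ^ d) := by ring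
  calc ∑ d ∈ (range (n + 1)).filter (fun d : ℕ => (d : ℝ) ≤ M), (n.choose d : ℝ) * a ^ d
      ≤ ∑ d ∈ (range (n + 1)).filter (fun d : ℕ => (d : ℝ) ≤ M),
          exp (s * M) * ((n.choose d : ℝ) * (a * exp (-s)) ^ d) :=
        sum_le_sum fun d hd => hterm d (mem_filter.1 hd).2
    _ ≤ ∑ d ∈ range (n + 1), exp (s * M) * ((n.choose d : ℝ) * (a * exp (-s)) ^ d) :=
        sum_le_sum_of_subset_of_nonneg (filter_subset _ _) fun _ _ _ => by positivity
    _ = exp (s * M) * (a * exp (-s) + 1) ^ n := by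
        rw [← mul_sum, add_pow]
        exact congrArg _ (sum_congr rfl fun d _ => by ring)

theorem small_improvement_sets_bound (n k : ℕ) (hn : 1 ≤ n) (hk : 2 ≤ k) :
    ∑ d ∈ (Finset.range (n + 1)).filter
        (fun d : ℕ => (d : ℝ) ≤ ((k : ℝ) - 1) / k * n - Real.sqrt (n * Real.log n)),
      (n.choose d : ℝ) * ((k : ℝ) - 1) ^ d ≤ (k : ℝ) ^ n / (n : ℝ) ^ 2 := by
  have hn0 : (0 : ℝ) < n := by exact_mod_cast hn
  have hk1 : (1 : ℝ) ≤ k := by exact_mod_cast (by omega : 1 ≤ k)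
  set t := √(n * log n)
  have ht : t ^ 2 = n * log n := sq_sqrt (mul_nonneg hn0.le (log_nonneg (by exact_mod_cast hn)))
  set p := ((k : ℝ) - 1) / k
  set s := 4 * t / n
  have hp1 : p ≤ 1 := div_le_one_of_le₀ (by linarith) (by linarith)
  have hbase : ((k : ℝ) - 1) * exp (-s) + 1 = k * (1 - p + p * exp (-s)) := by
    simp only [p]; field_simp; ring
  have hexponent : s * (p * n - t) + n * (p * -s + (-s) ^ 2 / 8) = -log (n ^ 2) := by
    rw [Real.log_pow]; push_cast
    simp only [p, s]; field_simp; linear_combination (-16 * (k : ℝ)) * ht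
  calc _ ≤ exp (s * (p * n - t)) * (((k : ℝ) - 1) * exp (-s) + 1) ^ n :=
        chernoff_sum_choose_mul_pow_le n (p * n - t) (by linarith : (0 : ℝ) ≤ k - 1)
          (by positivity : 0 ≤ s)
    _ ≤ exp (s * (p * n - t)) * (k * exp (p * -s + (-s) ^ 2 / 8)) ^ n := by
        rw [hbase]
        gcongr
        exact one_sub_add_mul_exp_le (by positivity) hp1 _
    _ = k ^ n * exp (-log (n ^ 2)) := by
        rw [← hexponent, mul_pow, ← exp_nat_mul, exp_add]; ring
    _ = k ^ n / n ^ 2 := by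
        rw [exp_neg, exp_log (by positivity), div_eq_mul_inv]
end

section
/- In a discounted MDP, let π be a policy, let U be a nonempty well-defined subset of T^π with |U| = d, and let π' = π ⊕ U. Then there exist d pairwise distinct policies π^(1), …, π^(d) with π ≺ π^(1) ⪯ π^(2) ⪯ … ⪯ π^(d) = π' such that π^(i) and π^(i+1) differ in exactly one state for all 1 ≤ i < d. -/
/-!
Write `Q^σ(s, a) = r(s, a) + γ ∑ₜ P(s, a, t) v^σ(t)`. Since `v^τ - v^β` solves
`x = (Q^β(·, τ ·) - v^β) + γ P^τ x` and `P^τ` is stochastic, `Q^β(·, τ ·) ≥ v^β` forces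
`v^τ - v^β ≥ Q^β(·, τ ·) - v^β ≥ 0`, and `Q^β(·, τ ·) ≤ v^β` forces `v^τ ≤ v^β`. In particular
`ν = π ⊕ U` dominates `π`. Some switch `(s, a) ∈ U` can be undone from `ν` without loss: otherwise
`Q^ν(s, π s) > v^ν(s)` on every state of `U`, with equality elsewhere, so `v^π > v^ν` on the states
of `U`. Undoing such switches one at a time leads from `π ⊕ U` back to a single switch; read
backwards this is the path. Its `i`-th policy switches exactly `i + 1` states of `π`, so the
policies are pairwise distinct.
-/

/-- The transition matrix induced by a policy. -/
noncomputable def polMatrix {n k : ℕ} (P : Fin n → Fin k → Fin n → ℝ)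
    (π : Fin n → Fin k) : Matrix (Fin n) (Fin n) ℝ :=
  Matrix.of fun s s' => P s (π s) s'

/-- The reward vector induced by a policy. -/
noncomputable def polReward {n k : ℕ} (r : Fin n → Fin k → ℝ)
    (π : Fin n → Fin k) : Fin n → ℝ :=
  fun s => r s (π s)

/-- The value vector of a policy: `v^π = ∑_{i=0}^∞ γ^i (P^π)^i r^π`. -/
noncomputable def polValue {n k : ℕ} (P : Fin n → Fin k → Fin n → ℝ)
    (r : Fin n → Fin k → ℝ) (γ : ℝ) (π : Fin n → Fin k) : Fin n → ℝ :=
  ∑' i : ℕ, γ ^ i • (polMatrix P π ^ i).mulVec (polReward r π)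

/-- `π ⪯ π'` : the policy `π'` dominates `π`. -/
def Dominates {n k : ℕ} (P : Fin n → Fin k → Fin n → ℝ) (r : Fin n → Fin k → ℝ)
    (γ : ℝ) (π π' : Fin n → Fin k) : Prop :=
  ∀ s, polValue P r γ π s ≤ polValue P r γ π' s

/-- `π ≺ π'` : the policy `π'` strictly dominates `π`. -/
def StrictDominates {n k : ℕ} (P : Fin n → Fin k → Fin n → ℝ) (r : Fin n → Fin k → ℝ)
    (γ : ℝ) (π π' : Fin n → Fin k) : Prop :=
  Dominates P r γ π π' ∧ ∃ s, polValue P r γ π s < polValue P r γ π' s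

/-- A set of state-action pairs is well-defined if it contains each state at most once. -/
def WellDefined {n k : ℕ} (U : Set (Fin n × Fin k)) : Prop :=
  ∀ s a a', (s, a) ∈ U → (s, a') ∈ U → a = a'

-- `π ⊕ U` : the policy obtained from `π` by switching the action at `s` to `a`
-- for each `(s, a) ∈ U` (intended for well-defined `U`).
open Classical in
noncomputable def switch {n k : ℕ} (π : Fin n → Fin k) (U : Set (Fin n × Fin k)) :
    Fin n → Fin k :=
  fun s => if h : ∃ a, (s, a) ∈ U then h.choose else π s

/-- The improvement set `T^π = {(s,a) : π ⊕ {(s,a)} ≻ π}`. -/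
def improvementSet {n k : ℕ} (P : Fin n → Fin k → Fin n → ℝ) (r : Fin n → Fin k → ℝ)
    (γ : ℝ) (π : Fin n → Fin k) : Set (Fin n × Fin k) :=
  {p | StrictDominates P r γ π (Function.update π p.1 p.2)}

/-- The set of improvement states `S^π`. -/
def improvementStates {n k : ℕ} (P : Fin n → Fin k → Fin n → ℝ) (r : Fin n → Fin k → ℝ)
    (γ : ℝ) (π : Fin n → Fin k) : Set (Fin n) :=
  {s | ∃ a, (s, a) ∈ improvementSet P r γ π}


open Finset Matrix Function

section RowStochastic

variable {ι : Type*} [Fintype ι] [DecidableEq ι] {M : Matrix ι ι ℝ}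

lemma norm_mulVec_le_of_mem_rowStochastic (hM : M ∈ rowStochastic ℝ ι) (b : ι → ℝ) :
    ‖M *ᵥ b‖ ≤ ‖b‖ := by
  refine (pi_norm_le_iff_of_nonneg (norm_nonneg b)).2 fun i => ?_
  calc ‖(M *ᵥ b) i‖ ≤ ∑ j, M i j * ‖b j‖ := by
        refine (norm_sum_le _ _).trans (sum_le_sum fun j _ => ?_)
        rw [norm_mul, Real.norm_of_nonneg (nonneg_of_mem_rowStochastic hM)]
    _ ≤ ∑ j, M i j * ‖b‖ :=
        sum_le_sum fun j _ => mul_le_mul_of_nonneg_left (norm_le_pi_norm b j)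
          (nonneg_of_mem_rowStochastic hM)
    _ = ‖b‖ := by rw [← sum_mul, sum_row_of_mem_rowStochastic hM, one_mul]

lemma le_of_eq_add_smul_mulVec (hM : M ∈ rowStochastic ℝ ι) {γ : ℝ} (hγ0 : 0 ≤ γ)
    (hγ1 : γ < 1) {x e : ι → ℝ} (hx : x = e + γ • M *ᵥ x) (he : 0 ≤ e) : e ≤ x := by
  have hx_apply (j : ι) : x j = e j + γ * (M *ᵥ x) j := congrFun hx j
  intro i
  obtain ⟨i₀, -, hmin⟩ := exists_min_image univ x ⟨i, mem_univ i⟩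
  -- at a minimum of `x` the equation gives `(1 - γ) x ≥ e ≥ 0`
  have hx_le : x i₀ ≤ (M *ᵥ x) i₀ :=
    calc x i₀ = ∑ j, M i₀ j * x i₀ := by rw [← sum_mul, sum_row_of_mem_rowStochastic hM, one_mul]
      _ ≤ ∑ j, M i₀ j * x j :=
        sum_le_sum fun j _ => mul_le_mul_of_nonneg_left (hmin j (mem_univ j))
          (nonneg_of_mem_rowStochastic hM)
  have hx_i₀ : 0 ≤ x i₀ := by
    have he₀ : 0 ≤ e i₀ := he i₀
    have : 0 ≤ (1 - γ) * x i₀ := by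
      nlinarith [hx_apply i₀, mul_le_mul_of_nonneg_left hx_le hγ0]
    exact nonneg_of_mul_nonneg_right this (sub_pos.2 hγ1)
  have hMx : 0 ≤ (M *ᵥ x) i :=
    nonneg_mulVec_of_mem_rowStochastic hM (fun j => hx_i₀.trans (hmin j (mem_univ j))) i
  linarith [hx_apply i, mul_nonneg hγ0 hMx]

end RowStochastic

lemma hammingDist_update_left {ι : Type*} {β : ι → Type*} [Fintype ι] [DecidableEq ι]
    [∀ i, DecidableEq (β i)] {x y : ∀ i, β i} {a : ι} {b : β a} (hxy : x a = y a)
    (hb : b ≠ y a) : hammingDist (update x a b) y = hammingDist x y + 1 := by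
  have hdiff : univ.filter (fun i => update x a b i ≠ y i)
      = insert a (univ.filter fun i => x i ≠ y i) := by
    ext i
    rcases eq_or_ne i a with rfl | hi <;> simp [*]
  rw [hammingDist, hammingDist, hdiff, card_insert_of_notMem (by simp [hxy])]

section Switch

variable {n k : ℕ} {π : Fin n → Fin k}

lemma WellDefined.mono {U V : Set (Fin n × Fin k)} (hUV : U ⊆ V) (hV : WellDefined V) :
    WellDefined U :=
  fun s a a' ha ha' => hV s a a' (hUV ha) (hUV ha')

lemma switch_apply_of_mem {U : Set (Fin n × Fin k)} (hU : WellDefined U) {s : Fin n} {a : Fin k}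
    (h : (s, a) ∈ U) : switch π U s = a := by
  have hs : ∃ a', (s, a') ∈ U := ⟨a, h⟩
  rw [switch, dif_pos hs]
  exact hU s _ a hs.choose_spec h

lemma switch_apply_of_forall_notMem {U : Set (Fin n × Fin k)} {s : Fin n}
    (h : ∀ a, (s, a) ∉ U) : switch π U s = π s := by
  rw [switch, dif_neg (not_exists.2 h)]

lemma switch_empty : switch π ∅ = π :=
  funext fun _ => switch_apply_of_forall_notMem fun _ => Set.notMem_empty _

lemma switch_erase_apply {U : Finset (Fin n × Fin k)} (hU : WellDefined (U : Set (Fin n × Fin k)))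
    {p : Fin n × Fin k} (hp : p ∈ U) : switch π ↑(U.erase p) p.1 = π p.1 :=
  switch_apply_of_forall_notMem fun a ha => by
    have ha' := mem_erase.1 (mem_coe.1 ha)
    exact ha'.1 (Prod.ext rfl (hU _ _ _ (mem_coe.2 ha'.2) (mem_coe.2 hp)))

lemma switch_eq_update_switch_erase {U : Finset (Fin n × Fin k)}
    (hU : WellDefined (U : Set (Fin n × Fin k))) {p : Fin n × Fin k} (hp : p ∈ U) :
    switch π ↑U = update (switch π ↑(U.erase p)) p.1 p.2 := by
  have hU' : WellDefined (↑(U.erase p) : Set (Fin n × Fin k)) :=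
    hU.mono (coe_subset.2 (erase_subset p U))
  funext s
  rcases eq_or_ne s p.1 with rfl | hs
  · rw [update_self, switch_apply_of_mem hU (mem_coe.2 hp)]
  rw [update_of_ne hs]
  by_cases hsU : ∃ a, (s, a) ∈ U
  · obtain ⟨a, ha⟩ := hsU
    have ha' : (s, a) ∈ U.erase p := mem_erase.2 ⟨fun h => hs (congrArg Prod.fst h), ha⟩
    rw [switch_apply_of_mem hU (mem_coe.2 ha), switch_apply_of_mem hU' (mem_coe.2 ha')]
  · rw [switch_apply_of_forall_notMem fun a ha => hsU ⟨a, ha⟩,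
      switch_apply_of_forall_notMem fun a ha => hsU ⟨a, mem_of_mem_erase ha⟩]

end Switch

structure IsDiscountedMDP {n k : ℕ} (P : Fin n → Fin k → Fin n → ℝ) (γ : ℝ) : Prop where
  nonneg : ∀ s a s', 0 ≤ P s a s'
  sum_eq_one : ∀ s a, ∑ s', P s a s' = 1
  discount_nonneg : 0 ≤ γ
  discount_lt_one : γ < 1

def qValue {n k : ℕ} (P : Fin n → Fin k → Fin n → ℝ) (r : Fin n → Fin k → ℝ) (γ : ℝ)
    (v : Fin n → ℝ) (s : Fin n) (a : Fin k) : ℝ :=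
  r s a + γ * ∑ t, P s a t * v t

namespace IsDiscountedMDP

variable {n k : ℕ} {P : Fin n → Fin k → Fin n → ℝ} {r : Fin n → Fin k → ℝ} {γ : ℝ}

lemma polMatrix_mem_rowStochastic (hmdp : IsDiscountedMDP P γ) (π : Fin n → Fin k) :
    polMatrix P π ∈ rowStochastic ℝ (Fin n) :=
  mem_rowStochastic_iff_sum.2 ⟨fun _ _ => hmdp.nonneg _ _ _, fun _ => hmdp.sum_eq_one _ _⟩

lemma summable_polValue (hmdp : IsDiscountedMDP P γ) (π : Fin n → Fin k) :
    Summable fun i : ℕ => γ ^ i • (polMatrix P π ^ i) *ᵥ polReward r π := by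
  refine .of_norm_bounded
    ((summable_geometric_of_lt_one hmdp.discount_nonneg hmdp.discount_lt_one).mul_right
      ‖polReward r π‖) fun i => ?_
  rw [norm_smul, Real.norm_of_nonneg (pow_nonneg hmdp.discount_nonneg i)]
  exact mul_le_mul_of_nonneg_left (norm_mulVec_le_of_mem_rowStochastic
    (pow_mem (hmdp.polMatrix_mem_rowStochastic π) i) _) (pow_nonneg hmdp.discount_nonneg i)

lemma polValue_eq (hmdp : IsDiscountedMDP P γ) (π : Fin n → Fin k) :
    polValue P r γ π = polReward r π + γ • polMatrix P π *ᵥ polValue P r γ π := by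
  set A := polMatrix P π
  set f := fun i : ℕ => γ ^ i • (A ^ i) *ᵥ polReward r π
  have hf : Summable f := hmdp.summable_polValue π
  have hshift (i : ℕ) : f (i + 1) = γ • A *ᵥ f i := by
    simp only [f, pow_succ', ← mulVec_mulVec, mulVec_smul, smul_smul]
  have hcont : Continuous fun v : Fin n → ℝ => γ • A *ᵥ v :=
    (continuous_const.matrix_mulVec continuous_id).const_smul γ
  calc polValue P r γ π = f 0 + ∑' i, f (i + 1) := hf.tsum_eq_zero_add
    _ = polReward r π + ∑' i, γ • A *ᵥ f i := by
      simp only [f, hshift, pow_zero, one_smul, one_mulVec]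
    _ = polReward r π + γ • A *ᵥ polValue P r γ π :=
      congrArg _ (hf.hasSum.map (γ • A.mulVecLin) hcont).tsum_eq

lemma qValue_policy_eq (τ : Fin n → Fin k) (v : Fin n → ℝ) :
    (fun s => qValue P r γ v s (τ s)) = polReward r τ + γ • polMatrix P τ *ᵥ v := by
  ext s
  simp [qValue, polReward, polMatrix, mulVec, dotProduct]

lemma polValue_apply (hmdp : IsDiscountedMDP P γ) (π : Fin n → Fin k) (s : Fin n) :
    polValue P r γ π s = qValue P r γ (polValue P r γ π) s (π s) :=
  (congrFun (hmdp.polValue_eq π) s).trans (congrFun (qValue_policy_eq π _) s).symm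

lemma polValue_sub_polValue (hmdp : IsDiscountedMDP P γ) (β τ : Fin n → Fin k) :
    polValue P r γ τ - polValue P r γ β
      = ((fun s => qValue P r γ (polValue P r γ β) s (τ s)) - polValue P r γ β)
        + γ • polMatrix P τ *ᵥ (polValue P r γ τ - polValue P r γ β) := by
  conv_lhs => rw [hmdp.polValue_eq τ]
  rw [qValue_policy_eq, mulVec_sub, smul_sub]
  abel

lemma qValue_sub_le_polValue_sub (hmdp : IsDiscountedMDP P γ) {β τ : Fin n → Fin k}
    (h : ∀ s, polValue P r γ β s ≤ qValue P r γ (polValue P r γ β) s (τ s)) (s : Fin n) :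
    qValue P r γ (polValue P r γ β) s (τ s) - polValue P r γ β s
      ≤ polValue P r γ τ s - polValue P r γ β s :=
  le_of_eq_add_smul_mulVec (hmdp.polMatrix_mem_rowStochastic τ) hmdp.discount_nonneg
    hmdp.discount_lt_one (hmdp.polValue_sub_polValue β τ) (fun s => sub_nonneg.2 (h s)) s

lemma dominates_of_le_qValue (hmdp : IsDiscountedMDP P γ) {β τ : Fin n → Fin k}
    (h : ∀ s, polValue P r γ β s ≤ qValue P r γ (polValue P r γ β) s (τ s)) :
    Dominates P r γ β τ := fun s => by
  linarith [hmdp.qValue_sub_le_polValue_sub h s, h s]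

lemma dominates_of_qValue_le (hmdp : IsDiscountedMDP P γ) {β τ : Fin n → Fin k}
    (h : ∀ s, qValue P r γ (polValue P r γ β) s (τ s) ≤ polValue P r γ β s) :
    Dominates P r γ τ β := by
  have hx : polValue P r γ β - polValue P r γ τ
      = (polValue P r γ β - fun s => qValue P r γ (polValue P r γ β) s (τ s))
        + γ • polMatrix P τ *ᵥ (polValue P r γ β - polValue P r γ τ) := by
    rw [← neg_sub (polValue P r γ τ), mulVec_neg, smul_neg]
    nth_rw 1 [hmdp.polValue_sub_polValue β τ]
    abel
  intro s
  have := le_of_eq_add_smul_mulVec (hmdp.polMatrix_mem_rowStochastic τ) hmdp.discount_nonneg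
    hmdp.discount_lt_one hx (fun s => sub_nonneg.2 (h s)) s
  simp only [Pi.sub_apply] at this
  linarith [h s]

lemma dominates_update_of_qValue_le (hmdp : IsDiscountedMDP P γ) {β : Fin n → Fin k} {s : Fin n}
    {a : Fin k} (h : qValue P r γ (polValue P r γ β) s a ≤ polValue P r γ β s) :
    Dominates P r γ (update β s a) β := by
  refine hmdp.dominates_of_qValue_le fun t => ?_
  rcases eq_or_ne t s with rfl | ht
  · rwa [update_self]
  · rw [update_of_ne ht, ← hmdp.polValue_apply]

lemma ne_of_mem_improvementSet {π : Fin n → Fin k} {s : Fin n} {a : Fin k}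
    (h : (s, a) ∈ improvementSet P r γ π) : a ≠ π s := by
  rintro rfl
  obtain ⟨-, t, ht⟩ := h
  rw [update_eq_self] at ht
  exact ht.false

lemma lt_qValue_of_mem_improvementSet (hmdp : IsDiscountedMDP P γ) {π : Fin n → Fin k}
    {s : Fin n} {a : Fin k} (h : (s, a) ∈ improvementSet P r γ π) :
    polValue P r γ π s < qValue P r γ (polValue P r γ π) s a := by
  by_contra! hle
  obtain ⟨-, t, ht⟩ := h
  exact (hmdp.dominates_update_of_qValue_le hle t).not_gt ht

lemma dominates_switch (hmdp : IsDiscountedMDP P γ) {π : Fin n → Fin k}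
    {U : Set (Fin n × Fin k)} (hU : WellDefined U) (hUT : U ⊆ improvementSet P r γ π) :
    Dominates P r γ π (switch π U) := by
  refine hmdp.dominates_of_le_qValue fun s => ?_
  by_cases hs : ∃ a, (s, a) ∈ U
  · obtain ⟨a, ha⟩ := hs
    rw [switch_apply_of_mem hU ha]
    exact (hmdp.lt_qValue_of_mem_improvementSet (hUT ha)).le
  · rw [switch_apply_of_forall_notMem (not_exists.1 hs), ← hmdp.polValue_apply]

lemma exists_dominates_switch_erase (hmdp : IsDiscountedMDP P γ) {π : Fin n → Fin k}
    {U : Finset (Fin n × Fin k)} (hne : U.Nonempty) (hU : WellDefined (U : Set (Fin n × Fin k)))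
    (hUT : ↑U ⊆ improvementSet P r γ π) :
    ∃ p ∈ U, Dominates P r γ (switch π ↑(U.erase p)) (switch π ↑U) := by
  obtain ⟨p, hpU, hp⟩ : ∃ p ∈ U, qValue P r γ (polValue P r γ (switch π ↑U)) p.1 (π p.1)
      ≤ polValue P r γ (switch π ↑U) p.1 := by
    by_contra! hlt
    have hle (s : Fin n) : polValue P r γ (switch π ↑U) s
        ≤ qValue P r γ (polValue P r γ (switch π ↑U)) s (π s) := by
      by_cases hs : ∃ a, (s, a) ∈ U
      · obtain ⟨a, ha⟩ := hs
        exact (hlt (s, a) ha).le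
      · rw [hmdp.polValue_apply _ s, switch_apply_of_forall_notMem fun a ha => hs ⟨a, ha⟩]
    obtain ⟨p, hpU⟩ := hne
    linarith [hmdp.qValue_sub_le_polValue_sub hle p.1, hlt p hpU, hmdp.dominates_switch hU hUT p.1]
  refine ⟨p, hpU, ?_⟩
  have hundo : switch π ↑(U.erase p) = update (switch π ↑U) p.1 (π p.1) := by
    rw [switch_eq_update_switch_erase hU hpU, update_idem,
      ← switch_erase_apply (π := π) hU hpU, update_eq_self]
  rw [hundo]
  exact hmdp.dominates_update_of_qValue_le hp

lemma exists_improving_path (hmdp : IsDiscountedMDP P γ) (π : Fin n → Fin k) :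
    ∀ (d : ℕ) (U : Finset (Fin n × Fin k)), U.card = d + 1 →
      WellDefined (U : Set (Fin n × Fin k)) → ↑U ⊆ improvementSet P r γ π →
      ∃ ρ : ℕ → Fin n → Fin k,
        StrictDominates P r γ π (ρ 0) ∧
        (∀ i < d, Dominates P r γ (ρ i) (ρ (i + 1)) ∧ hammingDist (ρ i) (ρ (i + 1)) = 1) ∧
        ρ d = switch π ↑U ∧
        ∀ i ≤ d, hammingDist (ρ i) π = i + 1
  | 0, U, hcard, hU, hUT => by
    obtain ⟨p, rfl⟩ := card_eq_one.1 hcard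
    have hρ : switch π ↑({p} : Finset (Fin n × Fin k)) = update π p.1 p.2 := by
      rw [switch_eq_update_switch_erase hU (mem_singleton_self p), erase_singleton, coe_empty,
        switch_empty]
    have hpT : p ∈ improvementSet P r γ π := hUT (mem_coe.2 (mem_singleton_self p))
    refine ⟨fun _ => switch π ↑({p} : Finset _), ?_, by simp, rfl, fun i hi => ?_⟩
    · rw [hρ]
      exact hpT
    · rw [Nat.le_zero.1 hi, hρ, hammingDist_update_left rfl (ne_of_mem_improvementSet hpT),
        hammingDist_self]
  | d + 1, U, hcard, hU, hUT => by
    obtain ⟨p, hpU, hdom⟩ := hmdp.exists_dominates_switch_erase (card_pos.1 (by omega)) hU hUT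
    have hsub : U.erase p ⊆ U := erase_subset p U
    obtain ⟨ρ, h0, hstep, hlast, hdist⟩ := exists_improving_path hmdp π d (U.erase p)
      (by rw [card_erase_of_mem hpU, hcard, Nat.add_sub_cancel]) (hU.mono (coe_subset.2 hsub))
      ((coe_subset.2 hsub).trans hUT)
    have hlast' : switch π ↑U = update (ρ d) p.1 p.2 := by
      rw [hlast, switch_eq_update_switch_erase hU hpU]
    have hp₁ : ρ d p.1 = π p.1 := by rw [hlast, switch_erase_apply hU hpU]
    have hp₂ : p.2 ≠ π p.1 := ne_of_mem_improvementSet (hUT (mem_coe.2 hpU))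
    refine ⟨fun i => if i ≤ d then ρ i else switch π ↑U, by simpa using h0, fun i hi => ?_,
      by simp, fun i hi => ?_⟩
    · rcases (Nat.lt_succ_iff.1 hi).lt_or_eq with hi | rfl
      · simpa [hi.le, Nat.succ_le_of_lt hi] using hstep i hi
      · simp only [le_refl, if_true, Nat.not_succ_le_self, if_false]
        refine ⟨hlast ▸ hdom, ?_⟩
        rw [hlast', hammingDist_comm, hammingDist_update_left rfl (hp₁ ▸ hp₂), hammingDist_self]
    · rcases (Nat.le_succ_iff.1 hi) with hi | rfl
      · simpa [hi] using hdist i hi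
      · simp only [Nat.not_succ_le_self, if_false]
        rw [hlast', hammingDist_update_left hp₁ hp₂, hdist d le_rfl]

end IsDiscountedMDP

theorem path_of_neighbors_general (n k : ℕ)
    (P : Fin n → Fin k → Fin n → ℝ) (r : Fin n → Fin k → ℝ) (γ : ℝ)
    (hP0 : ∀ s a s', 0 ≤ P s a s') (hP1 : ∀ s a, ∑ s', P s a s' = 1)
    (hγ0 : 0 ≤ γ) (hγ1 : γ < 1)
    (π : Fin n → Fin k) (U : Finset (Fin n × Fin k)) (d : ℕ)
    (hne : U.Nonempty) (hwd : WellDefined (↑U : Set (Fin n × Fin k)))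
    (hsub : (↑U : Set (Fin n × Fin k)) ⊆ improvementSet P r γ π)
    (hcard : U.card = d)
    (π' : Fin n → Fin k) (hπ' : π' = switch π (↑U : Set (Fin n × Fin k))) :
    ∃ ρ : Fin d → Fin n → Fin k,
      Function.Injective ρ ∧
      (∀ h0 : 0 < d, StrictDominates P r γ π (ρ ⟨0, h0⟩)) ∧
      (∀ i : ℕ, ∀ hi : i + 1 < d,
        Dominates P r γ (ρ ⟨i, Nat.lt_of_succ_lt hi⟩) (ρ ⟨i + 1, hi⟩) ∧
        (Finset.univ.filter
          fun s => ρ ⟨i, Nat.lt_of_succ_lt hi⟩ s ≠ ρ ⟨i + 1, hi⟩ s).card = 1) ∧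
      (∀ hl : d - 1 < d, ρ ⟨d - 1, hl⟩ = π') := by
  obtain ⟨m, rfl⟩ : ∃ m, d = m + 1 := Nat.exists_eq_add_one.2 (hcard ▸ hne.card_pos)
  obtain ⟨ρ, h0, hstep, hlast, hdist⟩ :=
    IsDiscountedMDP.exists_improving_path ⟨hP0, hP1, hγ0, hγ1⟩ π m U hcard hwd hsub
  refine ⟨fun i => ρ i, fun i j hij => Fin.ext ?_, fun _ => h0,
    fun i hi => hstep i (Nat.succ_lt_succ_iff.1 hi), fun _ => hπ' ▸ hlast⟩
  have hi := hdist i (Nat.lt_succ_iff.1 i.2)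
  have hj := hdist j (Nat.lt_succ_iff.1 j.2)
  simp only at hij
  rw [hij] at hi
  omega

theorem path_of_neighbors (n k : ℕ) (hn : 1 ≤ n) (hk : 1 ≤ k)
    (P : Fin n → Fin k → Fin n → ℝ) (r : Fin n → Fin k → ℝ) (γ : ℝ)
    (hP0 : ∀ s a s', 0 ≤ P s a s') (hP1 : ∀ s a, ∑ s', P s a s' = 1)
    (hγ0 : 0 ≤ γ) (hγ1 : γ < 1)
    (π : Fin n → Fin k) (U : Finset (Fin n × Fin k)) (d : ℕ)
    (hne : U.Nonempty) (hwd : WellDefined (↑U : Set (Fin n × Fin k)))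
    (hsub : (↑U : Set (Fin n × Fin k)) ⊆ improvementSet P r γ π)
    (hcard : U.card = d)
    (π' : Fin n → Fin k) (hπ' : π' = switch π (↑U : Set (Fin n × Fin k))) :
    ∃ ρ : Fin d → Fin n → Fin k,
      Function.Injective ρ ∧
      (∀ h0 : 0 < d, StrictDominates P r γ π (ρ ⟨0, h0⟩)) ∧
      (∀ i : ℕ, ∀ hi : i + 1 < d,
        Dominates P r γ (ρ ⟨i, Nat.lt_of_succ_lt hi⟩) (ρ ⟨i + 1, hi⟩) ∧
        (Finset.univ.filter
          fun s => ρ ⟨i, Nat.lt_of_succ_lt hi⟩ s ≠ ρ ⟨i + 1, hi⟩ s).card = 1) ∧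
      (∀ hl : d - 1 < d, ρ ⟨d - 1, hl⟩ = π') :=
  path_of_neighbors_general n k P r γ hP0 hP1 hγ0 hγ1 π U d hne hwd hsub hcard π' hπ'
end

section
/- In a discounted MDP, if U is a nonempty well-defined subset of the improvement set T^π of a policy π, then π ⊕ U ≻ π. -/
open Matrix

section RowStochastic

variable {ι : Type*} [Fintype ι] [DecidableEq ι] {A : Matrix ι ι ℝ} {γ : ℝ}

lemma norm_mulVec_le_of_mem_rowStochastic_s14 (hA : A ∈ rowStochastic ℝ ι) (x : ι → ℝ) :
    ‖A *ᵥ x‖ ≤ ‖x‖ := by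
  refine (pi_norm_le_iff_of_nonneg (norm_nonneg x)).2 fun i => ?_
  calc ‖(A *ᵥ x) i‖ = |∑ j, A i j * x j| := rfl
    _ ≤ ∑ j, |A i j * x j| := Finset.abs_sum_le_sum_abs _ _
    _ ≤ ∑ j, A i j * ‖x‖ := Finset.sum_le_sum fun j _ => by
        rw [abs_mul, abs_of_nonneg (nonneg_of_mem_rowStochastic hA)]
        exact mul_le_mul_of_nonneg_left (norm_le_pi_norm x j)
          (nonneg_of_mem_rowStochastic hA)
    _ = ‖x‖ := by rw [← Finset.sum_mul, sum_row_of_mem_rowStochastic hA, one_mul]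

lemma summable_discounted_pow_mulVec (hA : A ∈ rowStochastic ℝ ι) (hγ0 : 0 ≤ γ)
    (hγ1 : γ < 1) (c : ι → ℝ) : Summable fun i : ℕ => γ ^ i • (A ^ i *ᵥ c) := by
  refine .of_norm_bounded ((summable_geometric_of_lt_one hγ0 hγ1).mul_left ‖c‖) fun i => ?_
  rw [norm_smul, Real.norm_of_nonneg (pow_nonneg hγ0 i), mul_comm]
  exact mul_le_mul_of_nonneg_right
    (norm_mulVec_le_of_mem_rowStochastic_s14 (pow_mem hA i) c) (pow_nonneg hγ0 i)

lemma tsum_discounted_pow_mulVec_eq (hA : A ∈ rowStochastic ℝ ι) (hγ0 : 0 ≤ γ)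
    (hγ1 : γ < 1) (c : ι → ℝ) :
    ∑' i : ℕ, γ ^ i • (A ^ i *ᵥ c) = c + γ • A *ᵥ ∑' i : ℕ, γ ^ i • (A ^ i *ᵥ c) := by
  set f : ℕ → ι → ℝ := fun i => γ ^ i • (A ^ i *ᵥ c)
  have hf : HasSum f (∑' i, f i) := (summable_discounted_pow_mulVec hA hγ0 hγ1 c).hasSum
  have hshift : HasSum (fun i => f (i + 1)) (γ • A *ᵥ ∑' i, f i) := by
    have hsucc : ∀ i, f (i + 1) = γ • A *ᵥ f i := fun i => by
      simp only [f, pow_succ', ← mulVec_mulVec, mulVec_smul, smul_smul]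
    simpa only [hsucc, Function.comp_apply, mulVecLin_apply] using
      (hf.map A.mulVecLin (LinearMap.continuous_of_finiteDimensional _)).const_smul γ
  have hdrop := (hasSum_nat_add_iff' 1).2 hf
  rw [Finset.sum_range_one] at hdrop
  have hf0 : f 0 = c := by simp [f]
  rw [← hf0, ← hdrop.unique hshift]
  abel

lemma le_of_eq_add_smul_mulVec_s14 (hA : A ∈ rowStochastic ℝ ι) (hγ0 : 0 ≤ γ) (hγ1 : γ < 1)
    {c w : ι → ℝ} (hc : 0 ≤ c) (hw : w = c + γ • A *ᵥ w) : c ≤ w := by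
  have hw_apply : ∀ i, w i = c i + γ * (A *ᵥ w) i := fun i => congrFun hw i
  have hw0 : 0 ≤ w := fun i => by
    have : Nonempty ι := ⟨i⟩
    obtain ⟨j, hj⟩ := Finite.exists_min w
    have hmin : γ * w j ≤ w j :=
      calc γ * w j = γ * ∑ k, A j k * w j := by
            rw [← Finset.sum_mul, sum_row_of_mem_rowStochastic hA, one_mul]
        _ ≤ γ * (A *ᵥ w) j := mul_le_mul_of_nonneg_left (Finset.sum_le_sum fun k _ =>
            mul_le_mul_of_nonneg_left (hj k) (nonneg_of_mem_rowStochastic hA)) hγ0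
        _ ≤ w j := by linarith [hw_apply j, show 0 ≤ c j from hc j]
    have : 0 ≤ w j := by nlinarith
    exact this.trans (hj i)
  intro i
  have := mul_nonneg hγ0 (nonneg_mulVec_of_mem_rowStochastic hA hw0 i)
  linarith [hw_apply i]

end RowStochastic

section MDP

variable {n k : ℕ} {P : Fin n → Fin k → Fin n → ℝ} {r : Fin n → Fin k → ℝ} {γ : ℝ}

noncomputable def advantage (P : Fin n → Fin k → Fin n → ℝ) (r : Fin n → Fin k → ℝ) (γ : ℝ)
    (π : Fin n → Fin k) (s : Fin n) (a : Fin k) : ℝ :=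
  r s a + γ * ∑ s', P s a s' * polValue P r γ π s' - polValue P r γ π s

lemma polMatrix_mem_rowStochastic (hP0 : ∀ s a s', 0 ≤ P s a s')
    (hP1 : ∀ s a, ∑ s', P s a s' = 1) (π : Fin n → Fin k) :
    polMatrix P π ∈ rowStochastic ℝ (Fin n) :=
  mem_rowStochastic_iff_sum.2 ⟨fun s _ => hP0 s (π s) _, fun s => hP1 s (π s)⟩

lemma polValue_eq_polReward_add (hP : ∀ π, polMatrix P π ∈ rowStochastic ℝ (Fin n))
    (hγ0 : 0 ≤ γ) (hγ1 : γ < 1) (π : Fin n → Fin k) :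
    polValue P r γ π = polReward r π + γ • polMatrix P π *ᵥ polValue P r γ π :=
  tsum_discounted_pow_mulVec_eq (hP π) hγ0 hγ1 _

lemma advantage_self (hP : ∀ π, polMatrix P π ∈ rowStochastic ℝ (Fin n))
    (hγ0 : 0 ≤ γ) (hγ1 : γ < 1) (π : Fin n → Fin k) (s : Fin n) :
    advantage P r γ π s (π s) = 0 := by
  have := congrFun (polValue_eq_polReward_add (r := r) hP hγ0 hγ1 π) s
  rw [advantage, sub_eq_zero, this]
  rfl

lemma polValue_sub_eq (hP : ∀ π, polMatrix P π ∈ rowStochastic ℝ (Fin n))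
    (hγ0 : 0 ≤ γ) (hγ1 : γ < 1) (π π' : Fin n → Fin k) :
    polValue P r γ π' - polValue P r γ π = (fun s => advantage P r γ π s (π' s)) +
      γ • polMatrix P π' *ᵥ (polValue P r γ π' - polValue P r γ π) := by
  have hadv : (fun s => advantage P r γ π s (π' s)) =
      polReward r π' + γ • polMatrix P π' *ᵥ polValue P r γ π - polValue P r γ π := rfl
  conv_lhs => rw [polValue_eq_polReward_add hP hγ0 hγ1 π']
  rw [hadv, mulVec_sub, smul_sub]
  abel

lemma advantage_le_polValue_sub (hP : ∀ π, polMatrix P π ∈ rowStochastic ℝ (Fin n))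
    (hγ0 : 0 ≤ γ) (hγ1 : γ < 1) {π π' : Fin n → Fin k}
    (hadv : ∀ s, 0 ≤ advantage P r γ π s (π' s)) (s : Fin n) :
    advantage P r γ π s (π' s) ≤ polValue P r γ π' s - polValue P r γ π s :=
  le_of_eq_add_smul_mulVec_s14 (hP π') hγ0 hγ1 hadv (polValue_sub_eq hP hγ0 hγ1 π π') s

lemma polValue_le_of_advantage_nonpos (hP : ∀ π, polMatrix P π ∈ rowStochastic ℝ (Fin n))
    (hγ0 : 0 ≤ γ) (hγ1 : γ < 1) {π π' : Fin n → Fin k}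
    (hadv : ∀ s, advantage P r γ π s (π' s) ≤ 0) (s : Fin n) :
    polValue P r γ π' s ≤ polValue P r γ π s := by
  have hneg : polValue P r γ π - polValue P r γ π' = -(fun s => advantage P r γ π s (π' s)) +
      γ • polMatrix P π' *ᵥ (polValue P r γ π - polValue P r γ π') := by
    conv_lhs => rw [← neg_sub, polValue_sub_eq hP hγ0 hγ1 π π']
    rw [neg_add, ← neg_sub (polValue P r γ π), mulVec_neg, smul_neg, neg_neg]
  have := le_of_eq_add_smul_mulVec_s14 (hP π') hγ0 hγ1 (fun s => neg_nonneg.2 (hadv s)) hneg s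
  simp only [Pi.sub_apply] at this
  linarith [hadv s]

lemma advantage_pos_of_mem_improvementSet (hP : ∀ π, polMatrix P π ∈ rowStochastic ℝ (Fin n))
    (hγ0 : 0 ≤ γ) (hγ1 : γ < 1) {π : Fin n → Fin k} {s : Fin n} {a : Fin k}
    (h : (s, a) ∈ improvementSet P r γ π) : 0 < advantage P r γ π s a := by
  obtain ⟨-, t, hlt⟩ := h
  by_contra! hle
  have hadv : ∀ t, advantage P r γ π t (Function.update π s a t) ≤ 0 := fun t => by
    rcases eq_or_ne t s with rfl | hts
    · simpa using hle
    · rw [Function.update_of_ne hts, advantage_self hP hγ0 hγ1]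
  exact (polValue_le_of_advantage_nonpos hP hγ0 hγ1 hadv t).not_gt hlt

lemma strictDominates_of_advantage (hP : ∀ π, polMatrix P π ∈ rowStochastic ℝ (Fin n))
    (hγ0 : 0 ≤ γ) (hγ1 : γ < 1) {π π' : Fin n → Fin k}
    (hnonneg : ∀ s, 0 ≤ advantage P r γ π s (π' s))
    (hpos : ∃ s, 0 < advantage P r γ π s (π' s)) : StrictDominates P r γ π π' := by
  have hle := advantage_le_polValue_sub hP hγ0 hγ1 hnonneg
  obtain ⟨s, hs⟩ := hpos
  exact ⟨fun t => by linarith [hle t, hnonneg t], s, by linarith [hle s]⟩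

end MDP

lemma switch_apply_mem {n k : ℕ} (π : Fin n → Fin k) {U : Set (Fin n × Fin k)} {s : Fin n}
    {a : Fin k} (h : (s, a) ∈ U) : (s, switch π U s) ∈ U := by
  have hex : ∃ a, (s, a) ∈ U := ⟨a, h⟩
  simpa only [switch, dif_pos hex] using hex.choose_spec

lemma switch_apply_eq_or_mem {n k : ℕ} (π : Fin n → Fin k) (U : Set (Fin n × Fin k))
    (s : Fin n) : switch π U s = π s ∨ (s, switch π U s) ∈ U := by
  by_cases hex : ∃ a, (s, a) ∈ U
  · exact .inr (switch_apply_mem π hex.choose_spec)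
  · exact .inl (dif_neg hex)

theorem switch_strict_improvement_general (n k : ℕ)
    (P : Fin n → Fin k → Fin n → ℝ) (r : Fin n → Fin k → ℝ) (γ : ℝ)
    (hP0 : ∀ s a s', 0 ≤ P s a s') (hP1 : ∀ s a, ∑ s', P s a s' = 1)
    (hγ0 : 0 ≤ γ) (hγ1 : γ < 1)
    (π : Fin n → Fin k) (U : Set (Fin n × Fin k)) (hne : U.Nonempty)
    (hsub : U ⊆ improvementSet P r γ π) :
    StrictDominates P r γ π (switch π U) := by
  have hP := polMatrix_mem_rowStochastic hP0 hP1
  have hpos : ∀ s, (s, switch π U s) ∈ U → 0 < advantage P r γ π s (switch π U s) :=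
    fun s hs => advantage_pos_of_mem_improvementSet hP hγ0 hγ1 (hsub hs)
  refine strictDominates_of_advantage hP hγ0 hγ1 (fun s => ?_) ?_
  · rcases switch_apply_eq_or_mem π U s with hs | hs
    · rw [hs, advantage_self hP hγ0 hγ1]
    · exact (hpos s hs).le
  · obtain ⟨⟨s, a⟩, hsa⟩ := hne
    exact ⟨s, hpos s (switch_apply_mem π hsa)⟩

theorem switch_strict_improvement (n k : ℕ) (hn : 1 ≤ n) (hk : 1 ≤ k)
    (P : Fin n → Fin k → Fin n → ℝ) (r : Fin n → Fin k → ℝ) (γ : ℝ)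
    (hP0 : ∀ s a s', 0 ≤ P s a s') (hP1 : ∀ s a, ∑ s', P s a s' = 1)
    (hγ0 : 0 ≤ γ) (hγ1 : γ < 1)
    (π : Fin n → Fin k) (U : Set (Fin n × Fin k)) (hne : U.Nonempty)
    (hwd : WellDefined U) (hsub : U ⊆ improvementSet P r γ π) :
    StrictDominates P r γ π (switch π U) :=
  switch_strict_improvement_general n k P r γ hP0 hP1 hγ0 hγ1 π U hne hsub
end
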